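/- If X is a strictly convex normed space of dimension ≥ 2, then the map sending a nonzero vector z to its Birkhoff–James orthogonality set N_z = {v : z ⊥ v} is injective on lines: if z₁, z₂ are linearly independent nonzero vectors then N_{z₁} ≠ N_{z₂}. -/

import Mathlib

/-! A Hahn–Banach functional norming `z₁` vanishes on some `v = z₂ - c • z₁ ≠ 0`, so
`z₁ ⊥ v`, hence `c • z₁ ⊥ v`. In a strictly convex space this orthogonality is strict:
`‖c • z₁‖ < ‖c • z₁ + v‖ = ‖z₂‖`. If `z₂ ⊥ v` held as well, then `‖z₂‖ ≤ ‖z₂ - v‖ = ‖c • z₁‖`. -/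

section

variable {𝕜 X : Type*} [RCLike 𝕜] [NormedAddCommGroup X] [NormedSpace 𝕜 X]

variable (𝕜) in
def BirkhoffOrthogonal (x y : X) : Prop :=
  ∀ l : 𝕜, ‖x‖ ≤ ‖x + l • y‖

namespace BirkhoffOrthogonal

variable {x y : X}

theorem of_dual {f : StrongDual 𝕜 X} (hf : ‖f‖ ≤ 1) (hfx : f x = ‖x‖) (hfy : f y = 0) :
    BirkhoffOrthogonal 𝕜 x y := fun l =>
  calc ‖x‖ = ‖f (x + l • y)‖ := by simp [hfx, hfy]
    _ ≤ ‖f‖ * ‖x + l • y‖ := f.le_opNorm _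
    _ ≤ ‖x + l • y‖ := mul_le_of_le_one_left (norm_nonneg _) hf

theorem smul_left (h : BirkhoffOrthogonal 𝕜 x y) (c : 𝕜) : BirkhoffOrthogonal 𝕜 (c • x) y := by
  intro l
  rcases eq_or_ne c 0 with rfl | hc
  · simp
  calc ‖c • x‖ = ‖c‖ * ‖x‖ := norm_smul c x
    _ ≤ ‖c‖ * ‖x + (c⁻¹ * l) • y‖ := by gcongr; exact h _
    _ = ‖c • x + l • y‖ := by rw [← norm_smul, smul_add, smul_smul, mul_inv_cancel_left₀ hc]

/-- The real structure only enters through the strict triangle inequality, so it need not be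
compatible with the `𝕜`-structure. -/
theorem norm_lt_norm_add [NormedSpace ℝ X] [StrictConvexSpace ℝ X]
    (h : BirkhoffOrthogonal 𝕜 x y) (hy : y ≠ 0) : ‖x‖ < ‖x + y‖ := by
  refine (one_smul 𝕜 y ▸ h 1).lt_of_ne' fun hxy => ?_
  have hne : x ≠ x + y := by simpa using hy
  have hlt : ‖x + (x + y)‖ < ‖x‖ + ‖x + y‖ :=
    not_sameRay_iff_norm_add_lt.1 ((not_sameRay_iff_of_norm_eq hxy.symm).2 hne)
  have hmid : x + (x + y) = (2 : 𝕜) • (x + (2 : 𝕜)⁻¹ • y) := by module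
  rw [hmid, norm_smul, RCLike.norm_two] at hlt
  linarith [h 2⁻¹]

end BirkhoffOrthogonal

theorem exists_birkhoffOrthogonal_sub_smul (x y : X) :
    ∃ c : 𝕜, BirkhoffOrthogonal 𝕜 x (y - c • x) := by
  rcases eq_or_ne x 0 with rfl | hx
  · exact ⟨0, fun l => by simp⟩
  obtain ⟨f, hf, hfx⟩ := exists_dual_vector 𝕜 x (norm_ne_zero_iff.2 hx)
  have hx' : (‖x‖ : 𝕜) ≠ 0 := RCLike.ofReal_ne_zero.2 (norm_ne_zero_iff.2 hx)
  refine ⟨f y / ‖x‖, .of_dual hf.le hfx ?_⟩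
  rw [map_sub, map_smul, hfx, smul_eq_mul, div_mul_cancel₀ _ hx', sub_self]

end

theorem stmt_12_general {𝕜 X : Type*} [RCLike 𝕜] [NormedAddCommGroup X] [NormedSpace 𝕜 X]
    (hsc : ∀ u v : X, ‖u‖ = 1 → ‖v‖ = 1 → u ≠ v → ‖u + v‖ < 2)
    {z₁ z₂ : X} (hli : LinearIndependent 𝕜 ![z₁, z₂]) :
    {v : X | ∀ l : 𝕜, ‖z₁ + l • v‖ ≥ ‖z₁‖} ≠ {v : X | ∀ l : 𝕜, ‖z₂ + l • v‖ ≥ ‖z₂‖} := by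
  let := NormedSpace.restrictScalars ℝ 𝕜 X
  have : StrictConvexSpace ℝ X :=
    .of_norm_add_ne_two fun u v hu hv huv => (hsc u v hu hv huv).ne
  intro hN
  obtain ⟨c, hc⟩ := exists_birkhoffOrthogonal_sub_smul (𝕜 := 𝕜) z₁ z₂
  set v := z₂ - c • z₁
  have hv : v ≠ 0 := sub_ne_zero.2 fun h => by
    simpa using (LinearIndependent.pair_iff.1 hli c (-1) (by simp [← h])).2
  have h₂ : BirkhoffOrthogonal 𝕜 z₂ v := (Set.ext_iff.1 hN v).1 hc
  have hlt := (hc.smul_left c).norm_lt_norm_add hv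
  rw [add_sub_cancel] at hlt
  have hle := h₂ (-1)
  rw [neg_one_smul, ← sub_eq_add_neg, sub_sub_cancel] at hle
  exact hle.not_gt hlt

theorem stmt_12 {𝕜 X : Type*} [RCLike 𝕜] [NormedAddCommGroup X] [NormedSpace 𝕜 X]
    (hdim : (2 : Cardinal) ≤ Module.rank 𝕜 X)
    (hsc : ∀ u v : X, ‖u‖ = 1 → ‖v‖ = 1 → u ≠ v → ‖u + v‖ < 2)
    {z₁ z₂ : X} (hli : LinearIndependent 𝕜 ![z₁, z₂]) :
    {v : X | ∀ l : 𝕜, ‖z₁ + l • v‖ ≥ ‖z₁‖} ≠ {v : X | ∀ l : 𝕜, ‖z₂ + l • v‖ ≥ ‖z₂‖} :=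
  stmt_12_general hsc hli
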